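/- Let g be smooth on Ω. Then for i = 1, 2 the pointwise identity ∂_2Γⁱ_12 − ∂_1Γⁱ_22 + Σ_j (Γʲ_12 Γⁱ_j2 − Γʲ_22 Γⁱ_j1) = −gⁱ¹ · (det g) · K holds on Ω, where K is the Gaussian curvature of g. -/

import Mathlib

set_option maxHeartbeats 1000000


open Real Set Filter Topology

noncomputable section

/-- Partial derivative of `f : ℝ × ℝ → ℝ` in coordinate direction `i`. -/
def pd (i : Fin 2) (f : ℝ × ℝ → ℝ) (p : ℝ × ℝ) : ℝ :=
  fderiv ℝ f p (if i = 0 then (1, 0) else (0, 1))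

/-- The metric components as a 2×2 symmetric matrix of functions. -/
def gmat (g11 g12 g22 : ℝ × ℝ → ℝ) (i j : Fin 2) : ℝ × ℝ → ℝ :=
  if i = 0 then (if j = 0 then g11 else g12) else (if j = 0 then g12 else g22)

/-- The determinant of the metric. -/
def gdet (g11 g12 g22 : ℝ × ℝ → ℝ) (p : ℝ × ℝ) : ℝ :=
  g11 p * g22 p - g12 p ^ 2

/-- Components of the inverse metric. -/
def ginv (g11 g12 g22 : ℝ × ℝ → ℝ) (i j : Fin 2) (p : ℝ × ℝ) : ℝ :=
  (if i = 0 then (if j = 0 then g22 p else -g12 p)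
   else (if j = 0 then -g12 p else g11 p)) / gdet g11 g12 g22 p

/-- Christoffel symbols Γˡ_{ij}. -/
def Chr (g11 g12 g22 : ℝ × ℝ → ℝ) (l i j : Fin 2) (p : ℝ × ℝ) : ℝ :=
  (1 / 2) * ∑ m : Fin 2, ginv g11 g12 g22 l m p *
    (pd i (gmat g11 g12 g22 j m) p + pd j (gmat g11 g12 g22 i m) p
      - pd m (gmat g11 g12 g22 i j) p)

/-- Second covariant derivatives ∇_{ij} z. -/
def cov2 (g11 g12 g22 z : ℝ × ℝ → ℝ) (i j : Fin 2) (p : ℝ × ℝ) : ℝ :=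
  pd i (pd j z) p - ∑ l : Fin 2, Chr g11 g12 g22 l i j p * pd l z p

/-- |∇_g z|². -/
def gradSq (g11 g12 g22 z : ℝ × ℝ → ℝ) (p : ℝ × ℝ) : ℝ :=
  ∑ i : Fin 2, ∑ j : Fin 2, ginv g11 g12 g22 i j p * pd i z p * pd j z p

/-- The Gaussian curvature of the metric g. -/
def GaussK (g11 g12 g22 : ℝ × ℝ → ℝ) (p : ℝ × ℝ) : ℝ :=
  (1 / gdet g11 g12 g22 p) * ∑ i : Fin 2, gmat g11 g12 g22 0 i p *
    (pd 0 (Chr g11 g12 g22 i 1 1) p - pd 1 (Chr g11 g12 g22 i 0 1) p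
      + ∑ j : Fin 2, (Chr g11 g12 g22 j 1 1 p * Chr g11 g12 g22 i j 0 p
          - Chr g11 g12 g22 j 0 1 p * Chr g11 g12 g22 i j 1 p))

/-- Darboux's equation at a point p. -/
def DarbouxEq (g11 g12 g22 z : ℝ × ℝ → ℝ) (p : ℝ × ℝ) : Prop :=
  cov2 g11 g12 g22 z 0 0 p * cov2 g11 g12 g22 z 1 1 p
      - cov2 g11 g12 g22 z 0 1 p * cov2 g11 g12 g22 z 1 0 p
    = GaussK g11 g12 g22 p * gdet g11 g12 g22 p * (1 - gradSq g11 g12 g22 z p)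

/-- A smooth Riemannian metric on Ω. -/
def IsMetricOn (g11 g12 g22 : ℝ × ℝ → ℝ) (Ω : Set (ℝ × ℝ)) : Prop :=
  ContDiffOn ℝ (⊤ : ℕ∞) g11 Ω ∧ ContDiffOn ℝ (⊤ : ℕ∞) g12 Ω ∧ ContDiffOn ℝ (⊤ : ℕ∞) g22 Ω ∧
  ∀ p ∈ Ω, 0 < g11 p ∧ 0 < gdet g11 g12 g22 p

/-- The centers q_n = (1/n, 0). -/
def qpt (n : ℕ) : ℝ × ℝ := (1 / (n : ℝ), 0)

/-- Half-width of the square Xⁿ (whose width is 1/(2n(n+1))). -/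
def halfw (n : ℕ) : ℝ := 1 / (4 * (n : ℝ) * ((n : ℝ) + 1))

/-- The open axis-parallel square Xⁿ centered at q_n of width 1/(2n(n+1)). -/
def sqX (n : ℕ) : Set (ℝ × ℝ) :=
  {p | |p.1 - 1 / (n : ℝ)| < halfw n ∧ |p.2| < halfw n}

/-- The square X = (-1,1) × (-1,1). -/
def Xset : Set (ℝ × ℝ) := Ioo (-1 : ℝ) 1 ×ˢ Ioo (-1 : ℝ) 1

/-- φ is C^∞ on the closure of X, vanishes to infinite order on ∂X, and has a sign on X. -/
def PhiAdmissible (φ : ℝ × ℝ → ℝ) : Prop :=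
  ContDiffOn ℝ (⊤ : ℕ∞) φ (closure Xset) ∧
  (∀ k : ℕ, ∀ p ∈ frontier Xset, iteratedFDerivWithin ℝ k φ (closure Xset) p = 0) ∧
  ((∀ p ∈ Xset, 0 < φ p) ∨ (∀ p ∈ Xset, φ p < 0))

/-- K is obtained from φ and the sequence γ by the construction of the paper. -/
def Kconstr (φ : ℝ × ℝ → ℝ) (γ : ℕ → ℝ) (K : ℝ × ℝ → ℝ) : Prop :=
  (∀ n : ℕ, 1 ≤ n → ∀ q ∈ closure (sqX n),
      K q = γ n * φ ((4 * (n : ℝ) * ((n : ℝ) + 1)) • (q - qpt n))) ∧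
  (∀ q : ℝ × ℝ, q ∉ ⋃ n ∈ {m : ℕ | 1 ≤ m}, sqX n → K q = 0)

/-- Right vertical side +v_n of ∂Xⁿ. -/
def vSideR (n : ℕ) : Set (ℝ × ℝ) :=
  {p | p.1 = 1 / (n : ℝ) + halfw n ∧ |p.2| ≤ halfw n}

/-- Left vertical side -v_n of ∂Xⁿ. -/
def vSideL (n : ℕ) : Set (ℝ × ℝ) :=
  {p | p.1 = 1 / (n : ℝ) - halfw n ∧ |p.2| ≤ halfw n}

/-- Top horizontal side +h_n of ∂Xⁿ. -/
def hSideT (n : ℕ) : Set (ℝ × ℝ) :=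
  {p | p.2 = halfw n ∧ |p.1 - 1 / (n : ℝ)| ≤ halfw n}

/-- Bottom horizontal side -h_n of ∂Xⁿ. -/
def hSideB (n : ℕ) : Set (ℝ × ℝ) :=
  {p | p.2 = -halfw n ∧ |p.1 - 1 / (n : ℝ)| ≤ halfw n}

/-- At the point p there is a C³ change of coordinates Φ(x,y) = (x - p¹, s(x,y)) on a
neighborhood U ⊆ Ω of p, a C² function u and a positive continuous f on Φ(U), solving
∂_tt u + (K ∘ Φ⁻¹) ∂_ss u = (K ∘ Φ⁻¹) f on Φ(U). -/
def GoodChartAt (K : ℝ × ℝ → ℝ) (Ω : Set (ℝ × ℝ)) (p : ℝ × ℝ) : Prop :=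
  ∃ (U : Set (ℝ × ℝ)) (s : ℝ × ℝ → ℝ) (Ψ : ℝ × ℝ → ℝ × ℝ) (u f : ℝ × ℝ → ℝ),
    IsOpen U ∧ p ∈ U ∧ U ⊆ Ω ∧ ContDiffOn ℝ 3 s U ∧
    IsOpen ((fun q => (q.1 - p.1, s q)) '' U) ∧
    ContDiffOn ℝ 3 Ψ ((fun q => (q.1 - p.1, s q)) '' U) ∧
    (∀ q ∈ U, Ψ (q.1 - p.1, s q) = q) ∧
    (∀ w ∈ (fun q => (q.1 - p.1, s q)) '' U, ((Ψ w).1 - p.1, s (Ψ w)) = w) ∧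
    ContDiffOn ℝ 2 u ((fun q => (q.1 - p.1, s q)) '' U) ∧
    ContinuousOn f ((fun q => (q.1 - p.1, s q)) '' U) ∧
    (∀ w ∈ (fun q => (q.1 - p.1, s q)) '' U, 0 < f w) ∧
    (∀ w ∈ (fun q => (q.1 - p.1, s q)) '' U,
      pd 0 (pd 0 u) w + K (Ψ w) * pd 1 (pd 1 u) w = K (Ψ w) * f w)


lemma pd_contDiffOn {m n : WithTop ℕ∞} {f : ℝ × ℝ → ℝ} {Ω : Set (ℝ × ℝ)}
    (hΩ : IsOpen Ω) (hf : ContDiffOn ℝ n f Ω) (hmn : m + 1 ≤ n) (i : Fin 2) :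
    ContDiffOn ℝ m (pd i f) Ω := by
  unfold pd
  exact (hf.fderiv_of_isOpen hΩ hmn).clm_apply contDiffOn_const

lemma pd_congr {f h : ℝ × ℝ → ℝ} {p : ℝ × ℝ} (hfh : f =ᶠ[nhds p] h) (i : Fin 2) :
    pd i f p = pd i h p := by
  unfold pd; rw [hfh.fderiv_eq]

lemma pd_add {f h : ℝ × ℝ → ℝ} {p : ℝ × ℝ} (hf : DifferentiableAt ℝ f p)
    (hh : DifferentiableAt ℝ h p) (i : Fin 2) :
    pd i (fun q => f q + h q) p = pd i f p + pd i h p := by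
  unfold pd; rw [fderiv_fun_add hf hh]; simp

lemma pd_mul {f h : ℝ × ℝ → ℝ} {p : ℝ × ℝ} (hf : DifferentiableAt ℝ f p)
    (hh : DifferentiableAt ℝ h p) (i : Fin 2) :
    pd i (fun q => f q * h q) p = pd i f p * h p + f p * pd i h p := by
  unfold pd; rw [fderiv_fun_mul hf hh]
  simp only [ContinuousLinearMap.add_apply, ContinuousLinearMap.smul_apply, smul_eq_mul]
  ring

lemma pd_const_mul {f : ℝ × ℝ → ℝ} {p : ℝ × ℝ} (hf : DifferentiableAt ℝ f p) (c : ℝ) (i : Fin 2) :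
    pd i (fun q => c * f q) p = c * pd i f p := by
  unfold pd; rw [fderiv_const_mul hf]; simp

lemma pd_comm {f : ℝ × ℝ → ℝ} {p : ℝ × ℝ} (hf : ContDiffAt ℝ 2 f p) :
    pd 0 (pd 1 f) p = pd 1 (pd 0 f) p := by
  have hsym : IsSymmSndFDerivAt ℝ f p := hf.isSymmSndFDerivAt (by simp [minSmoothness_of_isRCLikeNormedField])
  have hdiff : DifferentiableAt ℝ (fderiv ℝ f) p :=
    (hf.fderiv_right (m := 1) (by norm_num)).differentiableAt one_ne_zero
  unfold pd
  simp only [Fin.isValue, reduceIte, one_ne_zero]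
  rw [show (fun q => fderiv ℝ f q (0, 1)) = (fun q => fderiv ℝ f q ((fun _ => ((0:ℝ),(1:ℝ))) q)) from rfl]
  rw [show (fun q => fderiv ℝ f q (1, 0)) = (fun q => fderiv ℝ f q ((fun _ => ((1:ℝ),(0:ℝ))) q)) from rfl]
  rw [fderiv_clm_apply hdiff (differentiableAt_const _),
      fderiv_clm_apply hdiff (differentiableAt_const _)]
  simp [hsym (1,0) (0,1)]

theorem christoffel_curvature_identity
    (Ω : Set (ℝ × ℝ)) (hΩ : IsOpen Ω)
    (g11 g12 g22 : ℝ × ℝ → ℝ) (hg : IsMetricOn g11 g12 g22 Ω) :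
    ∀ i : Fin 2, ∀ p ∈ Ω,
      pd 1 (Chr g11 g12 g22 i 0 1) p - pd 0 (Chr g11 g12 g22 i 1 1) p
        + ∑ j : Fin 2, (Chr g11 g12 g22 j 0 1 p * Chr g11 g12 g22 i j 1 p
            - Chr g11 g12 g22 j 1 1 p * Chr g11 g12 g22 i j 0 p)
      = -(ginv g11 g12 g22 i 0 p) * gdet g11 g12 g22 p * GaussK g11 g12 g22 p := by
  obtain ⟨h11t, h12t, h22t, hpos⟩ := hg
  have h11 : ContDiffOn ℝ 2 g11 Ω := h11t.of_le (WithTop.coe_le_coe.mpr le_top)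
  have h12 : ContDiffOn ℝ 2 g12 Ω := h12t.of_le (WithTop.coe_le_coe.mpr le_top)
  have h22 : ContDiffOn ℝ 2 g22 Ω := h22t.of_le (WithTop.coe_le_coe.mpr le_top)
  have hgmat : ∀ a b : Fin 2, ContDiffOn ℝ 2 (gmat g11 g12 g22 a b) Ω := by
    intro a b
    fin_cases a <;> fin_cases b <;> simp [gmat] <;> assumption
  have hpdgmat : ∀ d a b : Fin 2, ContDiffOn ℝ 1 (pd d (gmat g11 g12 g22 a b)) Ω :=
    fun d a b => pd_contDiffOn hΩ (hgmat a b) (by norm_num) d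
  have hgdet : ContDiffOn ℝ 1 (gdet g11 g12 g22) Ω := by
    unfold gdet
    exact ((h11.of_le one_le_two).mul (h22.of_le one_le_two)).sub
      ((h12.of_le one_le_two).pow 2)
  have hDne : ∀ q ∈ Ω, gdet g11 g12 g22 q ≠ 0 := fun q hq => ((hpos q hq).2).ne'
  have hginv : ∀ a b : Fin 2, ContDiffOn ℝ 1 (ginv g11 g12 g22 a b) Ω := by
    intro a b
    unfold ginv
    apply ContDiffOn.div _ hgdet hDne
    fin_cases a <;> fin_cases b <;> simp <;>
      first
        | exact h22.of_le one_le_two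
        | exact (h12.of_le one_le_two).neg
        | exact h11.of_le one_le_two
  have hChr : ∀ l a b : Fin 2, ContDiffOn ℝ 1 (Chr g11 g12 g22 l a b) Ω := by
    intro l a b
    unfold Chr
    apply ContDiffOn.mul contDiffOn_const
    apply ContDiffOn.sum
    intro m _
    exact (hginv l m).mul (((hpdgmat a b m).add (hpdgmat b a m)).sub (hpdgmat m a b))
  have key11 : ∀ q ∈ Ω, g12 q * Chr g11 g12 g22 0 1 1 q + g22 q * Chr g11 g12 g22 1 1 1 q
      = (1/2) * pd 1 g22 q := by
    intro q hq
    have hD : g11 q * g22 q - g12 q ^ 2 ≠ 0 := by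
      have := (hpos q hq).2; unfold gdet at this; exact this.ne'
    simp only [Chr, ginv, gmat, gdet, Fin.sum_univ_two, Fin.isValue, Fin.reduceEq, reduceIte,
        one_ne_zero]
    field_simp
    have hD' : -g12 q ^ 2 + g22 q * g11 q ≠ 0 := by contrapose! hD; linarith
    linear_combination (pd 1 g22 q) * mul_inv_cancel₀ hD'
  have key01 : ∀ q ∈ Ω, g12 q * Chr g11 g12 g22 0 0 1 q + g22 q * Chr g11 g12 g22 1 0 1 q
      = (1/2) * pd 0 g22 q := by
    intro q hq
    have hD : g11 q * g22 q - g12 q ^ 2 ≠ 0 := by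
      have := (hpos q hq).2; unfold gdet at this; exact this.ne'
    simp only [Chr, ginv, gmat, gdet, Fin.sum_univ_two, Fin.isValue, Fin.reduceEq, reduceIte,
        one_ne_zero]
    field_simp
    have hD' : -g12 q ^ 2 + g22 q * g11 q ≠ 0 := by contrapose! hD; linarith
    linear_combination (pd 0 g22 q) * mul_inv_cancel₀ hD'
  intro i p hp
  have hmem : Ω ∈ 𝓝 p := hΩ.mem_nhds hp
  have hD : gdet g11 g12 g22 p ≠ 0 := hDne p hp
  have dAt : ∀ {f : ℝ × ℝ → ℝ}, ContDiffOn ℝ 1 f Ω → DifferentiableAt ℝ f p :=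
    fun hf => (hf.contDiffAt hmem).differentiableAt one_ne_zero
  have dg12 : DifferentiableAt ℝ g12 p := dAt (h12.of_le one_le_two)
  have dg22 : DifferentiableAt ℝ g22 p := dAt (h22.of_le one_le_two)
  have dC : ∀ l a b : Fin 2, DifferentiableAt ℝ (Chr g11 g12 g22 l a b) p :=
    fun l a b => dAt (hChr l a b)
  have dpd22 : ∀ d : Fin 2, DifferentiableAt ℝ (pd d g22) p :=
    fun d => dAt (pd_contDiffOn hΩ h22 (by norm_num) d)
  -- differentiate key11 in direction 0
  have e1 : pd 0 g12 p * Chr g11 g12 g22 0 1 1 p + g12 p * pd 0 (Chr g11 g12 g22 0 1 1) p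
      + (pd 0 g22 p * Chr g11 g12 g22 1 1 1 p + g22 p * pd 0 (Chr g11 g12 g22 1 1 1) p)
      = (1/2) * pd 1 (pd 0 g22) p := by
    have heq : (fun q => g12 q * Chr g11 g12 g22 0 1 1 q + g22 q * Chr g11 g12 g22 1 1 1 q)
        =ᶠ[𝓝 p] (fun q => (1/2) * pd 1 g22 q) :=
      Filter.eventually_of_mem hmem (fun q hq => key11 q hq)
    have h := pd_congr heq 0
    rw [pd_add (dg12.fun_mul (dC 0 1 1)) (dg22.fun_mul (dC 1 1 1)),
        pd_mul dg12 (dC 0 1 1), pd_mul dg22 (dC 1 1 1),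
        pd_const_mul (dpd22 1) (1/2) 0] at h
    rw [h, pd_comm ((h22.contDiffAt hmem))]
  -- differentiate key01 in direction 1
  have e2 : pd 1 g12 p * Chr g11 g12 g22 0 0 1 p + g12 p * pd 1 (Chr g11 g12 g22 0 0 1) p
      + (pd 1 g22 p * Chr g11 g12 g22 1 0 1 p + g22 p * pd 1 (Chr g11 g12 g22 1 0 1) p)
      = (1/2) * pd 1 (pd 0 g22) p := by
    have heq : (fun q => g12 q * Chr g11 g12 g22 0 0 1 q + g22 q * Chr g11 g12 g22 1 0 1 q)
        =ᶠ[𝓝 p] (fun q => (1/2) * pd 0 g22 q) :=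
      Filter.eventually_of_mem hmem (fun q hq => key01 q hq)
    have h := pd_congr heq 1
    rw [pd_add (dg12.fun_mul (dC 0 0 1)) (dg22.fun_mul (dC 1 0 1)),
        pd_mul dg12 (dC 0 0 1), pd_mul dg22 (dC 1 0 1),
        pd_const_mul (dpd22 0) (1/2) 1] at h
    exact h
  -- purely algebraic cancellation
  have Halg : -(pd 0 g12 p) * Chr g11 g12 g22 0 1 1 p - pd 0 g22 p * Chr g11 g12 g22 1 1 1 p
      + pd 1 g12 p * Chr g11 g12 g22 0 0 1 p + pd 1 g22 p * Chr g11 g12 g22 1 0 1 p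
      + g12 p * (Chr g11 g12 g22 0 1 1 p * Chr g11 g12 g22 0 0 0 p
          - Chr g11 g12 g22 0 0 1 p * Chr g11 g12 g22 0 0 1 p
          + Chr g11 g12 g22 1 1 1 p * Chr g11 g12 g22 0 1 0 p
          - Chr g11 g12 g22 1 0 1 p * Chr g11 g12 g22 0 1 1 p)
      + g22 p * (Chr g11 g12 g22 0 1 1 p * Chr g11 g12 g22 1 0 0 p
          - Chr g11 g12 g22 0 0 1 p * Chr g11 g12 g22 1 0 1 p
          + Chr g11 g12 g22 1 1 1 p * Chr g11 g12 g22 1 1 0 p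
          - Chr g11 g12 g22 1 0 1 p * Chr g11 g12 g22 1 1 1 p) = 0 := by
    have hDp : g11 p * g22 p - g12 p ^ 2 ≠ 0 := by
      have := (hpos p hp).2; unfold gdet at this; exact this.ne'
    simp only [Chr, ginv, gmat, gdet, Fin.sum_univ_two, Fin.isValue, Fin.reduceEq, reduceIte,
        one_ne_zero]
    field_simp
    ring
  obtain ⟨A0, hA0⟩ : ∃ x, x = pd 0 (Chr g11 g12 g22 0 1 1) p - pd 1 (Chr g11 g12 g22 0 0 1) p
      + (Chr g11 g12 g22 0 1 1 p * Chr g11 g12 g22 0 0 0 p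
          - Chr g11 g12 g22 0 0 1 p * Chr g11 g12 g22 0 0 1 p
          + (Chr g11 g12 g22 1 1 1 p * Chr g11 g12 g22 0 1 0 p
          - Chr g11 g12 g22 1 0 1 p * Chr g11 g12 g22 0 1 1 p)) := ⟨_, rfl⟩
  obtain ⟨A1, hA1⟩ : ∃ x, x = pd 0 (Chr g11 g12 g22 1 1 1) p - pd 1 (Chr g11 g12 g22 1 0 1) p
      + (Chr g11 g12 g22 0 1 1 p * Chr g11 g12 g22 1 0 0 p
          - Chr g11 g12 g22 0 0 1 p * Chr g11 g12 g22 1 0 1 p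
          + (Chr g11 g12 g22 1 1 1 p * Chr g11 g12 g22 1 1 0 p
          - Chr g11 g12 g22 1 0 1 p * Chr g11 g12 g22 1 1 1 p)) := ⟨_, rfl⟩
  have S1 : g12 p * A0 + g22 p * A1 = 0 := by
    rw [hA0, hA1]
    linear_combination e1 - e2 + Halg
  have hKval : GaussK g11 g12 g22 p
      = (1 / gdet g11 g12 g22 p) * (g11 p * A0 + g12 p * A1) := by
    rw [hA0, hA1]
    simp only [GaussK, gmat, Fin.sum_univ_two, Fin.isValue, Fin.reduceEq, reduceIte, one_ne_zero]
  fin_cases i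
  · have h1 : ginv g11 g12 g22 0 0 p = g22 p / gdet g11 g12 g22 p := by
      simp [ginv]
    simp only [Fin.mk_zero, Fin.mk_one, Fin.sum_univ_two, Fin.isValue]
    rw [h1, hKval]
    have hDdef : gdet g11 g12 g22 p = g11 p * g22 p - g12 p ^ 2 := rfl
    rw [hDdef] at hD ⊢
    field_simp
    have hD2 : g22 p * g11 p - g12 p ^ 2 ≠ 0 := by rwa [mul_comm (g22 p)]
    linear_combination hA0 + A0 * mul_inv_cancel₀ hD2 + g12 p * (g22 p * g11 p - g12 p ^ 2)⁻¹ * S1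
  · have h1 : ginv g11 g12 g22 1 0 p = -g12 p / gdet g11 g12 g22 p := by
      simp [ginv]
    simp only [Fin.mk_zero, Fin.mk_one, Fin.sum_univ_two, Fin.isValue]
    rw [h1, hKval]
    have hDdef : gdet g11 g12 g22 p = g11 p * g22 p - g12 p ^ 2 := rfl
    rw [hDdef] at hD ⊢
    field_simp
    linear_combination (g11 p * g22 p - g12 p ^ 2) * hA1 - g11 p * S1

end
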